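/- Let t, ℓ, n be positive integers with n ≥ 8tℓ + 4ℓ + 4t − 6. Let G be a graph on n vertices with minimum degree δ(G) ≥ ⌊n/2⌋, and let S ⊆ V(G) with |S| ≤ (t−1)(2ℓ+1). If the induced subgraph G − S contains a triangle, then G − S also contains a cycle of length 2ℓ+1. -/

import Mathlib

open SimpleGraph
open scoped Classical

/-- The largest real eigenvalue of the adjacency matrix of `G`
(the spectral radius of a graph). -/
noncomputable def specRad {V : Type} [Fintype V] (G : SimpleGraph V) : ℝ :=
  sSup {μ : ℝ | ∃ x : V → ℝ, x ≠ 0 ∧ (G.adjMatrix ℝ).mulVec x = μ • x}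

/-- `G` contains a (not necessarily induced) copy of `F` as a subgraph. -/
def ContainsCopy {α β : Type} (F : SimpleGraph α) (G : SimpleGraph β) : Prop :=
  ∃ f : α → β, Function.Injective f ∧ ∀ a b, F.Adj a b → G.Adj (f a) (f b)

/-- The Turán number `ex(n, F)`. -/
noncomputable def exNum {α : Type} (n : ℕ) (F : SimpleGraph α) : ℕ :=
  sSup {m : ℕ | ∃ G : SimpleGraph (Fin n), ¬ ContainsCopy F G ∧ G.edgeSet.ncard = m}

/-- The spectral Turán number `spex(n, F)`. -/
noncomputable def spex {α : Type} (n : ℕ) (F : SimpleGraph α) : ℝ :=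
  sSup {r : ℝ | ∃ G : SimpleGraph (Fin n), ¬ ContainsCopy F G ∧ specRad G = r}

/-- `t` vertex-disjoint copies of `F`. -/
def copies {α : Type} (t : ℕ) (F : SimpleGraph α) : SimpleGraph (Fin t × α) where
  Adj x y := x.1 = y.1 ∧ F.Adj x.2 y.2
  symm := ⟨fun _ _ h => ⟨h.1.symm, h.2.symm⟩⟩
  loopless := ⟨fun x h => F.loopless.irrefl x.2 h.2⟩

/-- The join `G + H` of two graphs. -/
def joinG {α β : Type} (G : SimpleGraph α) (H : SimpleGraph β) : SimpleGraph (α ⊕ β) where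
  Adj x y := match x, y with
    | Sum.inl a, Sum.inl b => G.Adj a b
    | Sum.inr a, Sum.inr b => H.Adj a b
    | Sum.inl _, Sum.inr _ => True
    | Sum.inr _, Sum.inl _ => True
  symm := by
    constructor
    rintro (a|a) (b|b) h
    · exact G.symm.symm _ _ h
    · trivial
    · trivial
    · exact H.symm.symm _ _ h
  loopless := by
    constructor
    rintro (a|a) h
    · exact G.loopless.irrefl a h
    · exact H.loopless.irrefl a h

/-- `S_{n,ℓ}^{+}`: the join of `K_ℓ` with an independent set of `n - ℓ` vertices,
plus one edge inside the independent set. -/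
def sPlus (n ℓ : ℕ) : SimpleGraph (Fin n) :=
  SimpleGraph.fromRel (fun i j => (i : ℕ) < ℓ ∨ ((i : ℕ) ≤ ℓ + 1 ∧ (j : ℕ) ≤ ℓ + 1))

/-- `S_{n,ℓ}^{++}`: the join of `K_ℓ` with an independent set of `n - ℓ` vertices,
plus a maximum matching inside the independent set. -/
def sPP (n ℓ : ℕ) : SimpleGraph (Fin n) :=
  SimpleGraph.fromRel (fun i j => (i : ℕ) < ℓ ∨ ((i : ℕ) - ℓ) / 2 = ((j : ℕ) - ℓ) / 2)

/-- The number of edges inside a vertex subset `A`. -/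
noncomputable def eIn {n : ℕ} (G : SimpleGraph (Fin n)) (A : Finset (Fin n)) : ℕ :=
  (G.induce (A : Set (Fin n))).edgeSet.ncard

/-- The number of edges between two disjoint vertex subsets `A` and `B`. -/
noncomputable def eCross {n : ℕ} (G : SimpleGraph (Fin n)) (A B : Finset (Fin n)) : ℕ :=
  Set.ncard {p : Fin n × Fin n | p.1 ∈ A ∧ p.2 ∈ B ∧ G.Adj p.1 p.2}

/-!
Write `H = G - S`. It has `n - |S|` vertices and minimum degree at least `⌊n/2⌋ - |S|`, so double
counting shows that for `ℓ ≥ 2` any three vertices of `H` have at least `2ℓ + 1` vertices adjacent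
to two of them. Grow the triangle two vertices at a time. If an odd cycle `C` of length at most
`2ℓ - 1` cannot be extended, call a vertex off `C` adjacent to both ends of an edge of `C` an ear of
that edge. At every vertex of `C` exactly one of its two cycle edges has an ear: otherwise the
supply of vertices off `C` adjacent to two of three given vertices yields a path of length four
that replaces a path of length two of `C`. Such an alternation is impossible around an odd cycle.
-/

open scoped Fin.NatCast in
theorem Fin.not_forall_iff_not_add_one {m : ℕ} [NeZero m] (hm : Odd m) (P : Fin m → Prop) :
    ¬ ∀ i, P i ↔ ¬ P (i + 1) := by
  intro h
  have key : ∀ a : ℕ, P a ↔ (P 0 ↔ Even a) := by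
    intro a
    induction a with
    | zero => simp
    | succ a ih =>
      have := h a
      rw [Nat.cast_succ, Nat.even_add_one]
      tauto
  have := key m
  rw [Fin.natCast_self] at this
  simp only [Nat.not_even_iff_odd.mpr hm] at this
  tauto

theorem Fin.notMem_range_tail {α : Type*} {k : ℕ} {c : Fin (k + 1) → α} {x : α}
    (hx : x ∉ Set.range c) : x ∉ Set.range (Fin.tail c) :=
  fun ⟨j, hj⟩ => hx ⟨j.succ, hj⟩

theorem Function.Injective.zero_notMem_range_tail {α : Type*} {k : ℕ} {c : Fin (k + 1) → α}
    (hc : Function.Injective c) : c 0 ∉ Set.range (Fin.tail c) :=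
  fun ⟨j, hj⟩ => Fin.succ_ne_zero j (hc hj)

theorem Set.nontrivial_sdiff_range_of_injective {α : Type*} {m : ℕ} {c : Fin m → α}
    (hc : Function.Injective c) {s : Set α} (hs : m + 2 ≤ s.ncard) :
    (s \ Set.range c).Nontrivial := by
  have hfin : s.Finite := Set.finite_of_ncard_pos (by omega)
  have hrange : (Set.range c).ncard = m := by simp [Set.ncard_range_of_injective hc]
  have := Set.le_ncard_sdiff (Set.range c) s (Set.toFinite _)
  have : Finite ↑(s \ Set.range c) := hfin.sdiff.to_subtype
  exact Set.one_lt_ncard_iff_nontrivial.mp (by omega)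

theorem Set.range_comp_add_right {A α : Type*} [AddGroup A] (c : A → α) (a : A) :
    Set.range (fun i => c (i + a)) = Set.range c :=
  (Equiv.addRight a).surjective.range_comp c

namespace SimpleGraph

variable {V : Type*} (G : SimpleGraph V)

def IsCycleMap {m : ℕ} [NeZero m] (c : Fin m → V) : Prop :=
  Function.Injective c ∧ ∀ i, G.Adj (c i) (c (i + 1))

def HasEar {m : ℕ} [NeZero m] (c : Fin m → V) (i : Fin m) : Prop :=
  ∃ q ∉ Set.range c, q ∈ G.commonNeighbors (c i) (c (i + 1))

def twoOfThreeNeighbors (u v w : V) : Set V :=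
  G.commonNeighbors u v ∪ G.commonNeighbors v w ∪ G.commonNeighbors u w

variable {G}

theorem forall_adj_add_one_iff {k : ℕ} (c : Fin (k + 1) → V) :
    (∀ i, G.Adj (c i) (c (i + 1))) ↔
      (∀ i : Fin k, G.Adj (c i.castSucc) (c i.succ)) ∧ G.Adj (c (Fin.last k)) (c 0) := by
  refine ⟨fun h => ⟨fun i => ?_, ?_⟩, fun ⟨h, hlast⟩ i => ?_⟩
  · simpa [Fin.coeSucc_eq_succ] using h i.castSucc
  · simpa using h (Fin.last k)
  · induction i using Fin.lastCases with
    | last => simpa using hlast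
    | cast i => simpa [Fin.coeSucc_eq_succ] using h i

theorem forall_adj_cons_iff {k : ℕ} (x : V) (p : Fin (k + 1) → V) :
    (∀ i : Fin (k + 1), G.Adj ((Fin.cons x p : Fin (k + 2) → V) i.castSucc)
      ((Fin.cons x p : Fin (k + 2) → V) i.succ)) ↔
      G.Adj x (p 0) ∧ ∀ i : Fin k, G.Adj (p i.castSucc) (p i.succ) := by
  simp [Fin.forall_fin_succ]

theorem hasEar_rotate {m : ℕ} [NeZero m] (c : Fin m → V) (a i : Fin m) :
    G.HasEar (fun j => c (j + a)) i ↔ G.HasEar c (i + a) := by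
  simp only [HasEar, Set.range_comp_add_right, add_right_comm]

theorem IsCycleMap.rotate {m : ℕ} [NeZero m] {c : Fin m → V} (hc : G.IsCycleMap c) (a : Fin m) :
    G.IsCycleMap fun i => c (i + a) :=
  ⟨hc.1.comp (add_left_injective a), fun i => by simpa [add_right_comm] using hc.2 (i + a)⟩

namespace IsCycleMap

variable {k : ℕ}

theorem exists_replace_zero {c : Fin (k + 2) → V} (hc : G.IsCycleMap c) {x y z : V}
    (hx : x ∉ Set.range (Fin.tail c)) (hy : y ∉ Set.range (Fin.tail c))
    (hz : z ∉ Set.range (Fin.tail c)) (hxy : x ≠ y) (hxz : x ≠ z) (hyz : y ≠ z)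
    (hcx : G.Adj (c (Fin.last _)) x) (hxy' : G.Adj x y) (hyz' : G.Adj y z)
    (hzc : G.Adj z (c 1)) :
    ∃ d : Fin (k + 4) → V, G.IsCycleMap d := by
  have hchain := ((forall_adj_add_one_iff c).mp hc.2).1
  refine ⟨Fin.cons x (Fin.cons y (Fin.cons z (Fin.tail c))), ?_, ?_⟩
  · simp only [Fin.cons_injective_iff, Fin.range_cons, Set.mem_insert_iff, not_or]
    exact ⟨⟨hxy, hxz, hx⟩, ⟨hyz, hy⟩, hz, hc.1.comp (Fin.succ_injective _)⟩
  · rw [forall_adj_add_one_iff, forall_adj_cons_iff, forall_adj_cons_iff, forall_adj_cons_iff]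
    refine ⟨⟨hxy', hyz', hzc, fun i => ?_⟩, by simpa [Fin.cons_last, Fin.tail] using hcx⟩
    simpa [Fin.tail, ← Fin.succ_castSucc] using hchain i.succ

variable {c : Fin (k + 3) → V}

theorem adj_last_zero (hc : G.IsCycleMap c) : G.Adj (c (Fin.last _)) (c 0) := by
  simpa using hc.2 (Fin.last _)

theorem adj_zero_one (hc : G.IsCycleMap c) : G.Adj (c 0) (c 1) := by
  simpa using hc.2 0

theorem exists_add_two_of_ears (hc : G.IsCycleMap c) {q p : V} (hq : q ∉ Set.range c)
    (hp : p ∉ Set.range c) (hqp : q ≠ p) (hqC : q ∈ G.commonNeighbors (c (Fin.last _)) (c 0))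
    (hpC : p ∈ G.commonNeighbors (c 0) (c 1)) :
    ∃ d : Fin (k + 5) → V, G.IsCycleMap d :=
  hc.exists_replace_zero (Fin.notMem_range_tail hq) hc.1.zero_notMem_range_tail
    (Fin.notMem_range_tail hp) (fun h => hq ⟨0, h.symm⟩) hqp (fun h => hp ⟨0, h⟩)
    hqC.1 hqC.2.symm hpC.1 hpC.2.symm

theorem exists_add_two_of_commonNeighbors (hc : G.IsCycleMap c) {b b' : V}
    (hb : b ∉ Set.range c) (hb' : b' ∉ Set.range c) (hbb' : b ≠ b')
    (hbC : b ∈ G.commonNeighbors (c (Fin.last _)) (c 1))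
    (hb'C : b' ∈ G.commonNeighbors (c (Fin.last _)) (c 1))
    (hfresh : (G.twoOfThreeNeighbors (c 0) b b' \ Set.range c).Nonempty) :
    ∃ d : Fin (k + 5) → V, G.IsCycleMap d := by
  obtain ⟨x, hxT, hx⟩ := hfresh
  have h0 := hc.1.zero_notMem_range_tail
  -- The new path from `c (Fin.last _)` to `c 1` is `b, x, c 0`, `b, x, b'` or `c 0, x, b'`.
  rcases hxT with (⟨h0x, hbx⟩ | ⟨hbx, hb'x⟩) | ⟨h0x, hb'x⟩
  · exact hc.exists_replace_zero (Fin.notMem_range_tail hb) (Fin.notMem_range_tail hx) h0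
      hbx.ne (fun h => hb ⟨0, h.symm⟩) h0x.ne.symm hbC.1 hbx h0x.symm hc.adj_zero_one
  · exact hc.exists_replace_zero (Fin.notMem_range_tail hb) (Fin.notMem_range_tail hx)
      (Fin.notMem_range_tail hb') hbx.ne hbb' hb'x.ne.symm hbC.1 hbx hb'x.symm hb'C.2.symm
  · exact hc.exists_replace_zero h0 (Fin.notMem_range_tail hx) (Fin.notMem_range_tail hb')
      h0x.ne (fun h => hb' ⟨0, h⟩) hb'x.ne.symm hc.adj_last_zero h0x hb'x.symm hb'C.2.symm

theorem hasEar_last_iff_not_hasEar_zero (hc : G.IsCycleMap c)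
    (hno : ¬∃ d : Fin (k + 5) → V, G.IsCycleMap d)
    (hrich : ∀ u v w, (G.twoOfThreeNeighbors u v w \ Set.range c).Nontrivial) :
    G.HasEar c (Fin.last _) ↔ ¬G.HasEar c 0 := by
  simp only [HasEar, Fin.last_add_one, zero_add]
  obtain ⟨w₁, ⟨hw₁T, hw₁⟩, w₂, ⟨hw₂T, hw₂⟩, hw⟩ :=
    hrich (c (Fin.last _)) (c 0) (c 1)
  constructor
  · rintro ⟨q, hq, hqC⟩ ⟨p, hp, hpC⟩
    obtain rfl | hqp := eq_or_ne q p
    · have key : ∀ x ∉ Set.range c,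
          x ∈ G.twoOfThreeNeighbors (c (Fin.last _)) (c 0) (c 1) → x = q := by
        rintro x hx ((hxC | hxC) | hxC) <;> by_contra hxq <;> refine hno ?_
        · exact hc.exists_add_two_of_ears hx hq hxq hxC hpC
        · exact hc.exists_add_two_of_ears hq hx (Ne.symm hxq) hqC hxC
        · exact hc.exists_add_two_of_commonNeighbors hx hq hxq hxC ⟨hqC.1, hpC.2⟩
            (hrich _ _ _).nonempty
      exact hw ((key w₁ hw₁ hw₁T).trans (key w₂ hw₂ hw₂T).symm)
    · exact hno (hc.exists_add_two_of_ears hq hp hqp hqC hpC)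
  · intro hnot
    by_contra hlast
    have key : ∀ x ∉ Set.range c, x ∈ G.twoOfThreeNeighbors (c (Fin.last _)) (c 0) (c 1) →
        x ∈ G.commonNeighbors (c (Fin.last _)) (c 1) := by
      rintro x hx ((hxC | hxC) | hxC)
      · exact absurd ⟨x, hx, hxC⟩ hlast
      · exact absurd ⟨x, hx, hxC⟩ hnot
      · exact hxC
    exact hno (hc.exists_add_two_of_commonNeighbors hw₁ hw₂ hw (key w₁ hw₁ hw₁T)
      (key w₂ hw₂ hw₂T) (hrich _ _ _).nonempty)

theorem exists_add_two (hc : G.IsCycleMap c) (hk : Even k)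
    (hrich : ∀ u v w, k + 5 ≤ (G.twoOfThreeNeighbors u v w).ncard) :
    ∃ d : Fin (k + 5) → V, G.IsCycleMap d := by
  by_contra hno
  refine Fin.not_forall_iff_not_add_one (m := k + 3) (hk.add_odd (by decide)) (G.HasEar c)
    fun i => ?_
  have hrich' u v w : (G.twoOfThreeNeighbors u v w \ Set.range c).Nontrivial :=
    Set.nontrivial_sdiff_range_of_injective hc.1 (by have := hrich u v w; omega)
  have hrot := (hc.rotate (i + 1)).hasEar_last_iff_not_hasEar_zero hno fun u v w => by
    simpa [Set.range_comp_add_right] using hrich' u v w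
  rwa [hasEar_rotate, hasEar_rotate, zero_add, add_comm i, ← add_assoc, Fin.last_add_one,
    zero_add, add_comm 1 i] at hrot

end IsCycleMap

theorem three_mul_le_card_add_two_mul_ncard [Fintype V] {d : ℕ} (hd : ∀ v, d ≤ G.degree v)
    (u v w : V) : 3 * d ≤ Fintype.card V + 2 * (G.twoOfThreeNeighbors u v w).ncard := by
  set T := G.twoOfThreeNeighbors u v w
  let f : V → ℕ := fun p =>
    (if G.Adj u p then 1 else 0) + (if G.Adj v p then 1 else 0) + (if G.Adj w p then 1 else 0)
  have hpoint : ∀ p, f p ≤ 1 + 2 * if p ∈ T then 1 else 0 := by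
    intro p
    simp only [f, T, twoOfThreeNeighbors, Set.mem_union, mem_commonNeighbors]
    split_ifs <;> simp_all
  have hdeg : G.degree u + G.degree v + G.degree w = ∑ p, f p := by
    simp only [f, Finset.sum_add_distrib, ← Finset.card_filter, ← neighborFinset_eq_filter,
      card_neighborFinset_eq_degree]
  have hT : ∑ p, (1 + 2 * if p ∈ T then 1 else 0) = Fintype.card V + 2 * T.ncard := by
    rw [Finset.sum_add_distrib, ← Finset.mul_sum, ← Finset.card_filter,
      Set.ncard_eq_toFinset_card']
    simp
  calc 3 * d ≤ G.degree u + G.degree v + G.degree w := by linarith [hd u, hd v, hd w]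
    _ ≤ _ := hdeg ▸ hT ▸ Finset.sum_le_sum fun p _ => hpoint p

theorem degree_sub_card_le_degree_induce_compl [Fintype V] [DecidableEq V] (S : Finset V)
    (v : ↥(S : Set V)ᶜ) :
    G.degree v - S.card ≤ (G.induce (S : Set V)ᶜ).degree v := by
  rw [← card_neighborFinset_eq_degree, ← card_neighborFinset_eq_degree,
    ← Finset.card_map (.subtype _), map_neighborFinset_induce]
  simpa [← Finset.sdiff_eq_inter_compl] using Finset.le_card_sdiff S (G.neighborFinset v)

theorem containsCopy_cycleGraph_iff {W : Type} {H : SimpleGraph W} {k : ℕ} :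
    ContainsCopy (cycleGraph (k + 2)) H ↔ ∃ c : Fin (k + 2) → W, H.IsCycleMap c := by
  refine ⟨fun ⟨c, hinj, hadj⟩ => ⟨c, hinj, fun i => hadj _ _ ?_⟩,
    fun ⟨c, hinj, hadj⟩ => ⟨c, hinj, fun a b hab => ?_⟩⟩
  · exact cycleGraph_adj.mpr (Or.inr (add_sub_cancel_left i 1))
  · rcases cycleGraph_adj.mp hab with h | h
    · exact (sub_eq_iff_eq_add'.mp h ▸ hadj b).symm
    · exact sub_eq_iff_eq_add'.mp h ▸ hadj a

theorem containsCopy_cycleGraph_odd {W : Type} {H : SimpleGraph W} {l : ℕ} (hl : 1 ≤ l)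
    (h3 : ContainsCopy (cycleGraph 3) H)
    (hrich : ∀ u v w, 2 * l + 1 ≤ (H.twoOfThreeNeighbors u v w).ncard) :
    ContainsCopy (cycleGraph (2 * l + 1)) H := by
  obtain ⟨j, rfl⟩ : ∃ j, l = j + 1 := ⟨l - 1, by omega⟩
  have key : ∀ i ≤ j, ∃ c : Fin (2 * i + 3) → W, H.IsCycleMap c := by
    intro i
    induction i with
    | zero => exact fun _ => containsCopy_cycleGraph_iff.mp h3
    | succ i ih =>
      intro hi
      obtain ⟨c, hc⟩ := ih (by omega)
      exact hc.exists_add_two (even_two_mul i) fun u v w => by have := hrich u v w; omega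
  rw [show 2 * (j + 1) + 1 = 2 * j + 1 + 2 by ring]
  exact containsCopy_cycleGraph_iff.mpr (key j le_rfl)

end SimpleGraph

theorem triangle_to_long_odd_cycle (t l n : ℕ) (ht : 1 ≤ t) (hl : 1 ≤ l)
    (hn : 8*t*l + 4*l + 4*t - 6 ≤ n)
    (G : SimpleGraph (Fin n)) (hdelta : n/2 ≤ G.minDegree)
    (S : Finset (Fin n)) (hS : S.card ≤ (t-1)*(2*l+1))
    (htri : ContainsCopy (cycleGraph 3) (G.induce ((S : Set (Fin n))ᶜ))) :
    ContainsCopy (cycleGraph (2*l+1)) (G.induce ((S : Set (Fin n))ᶜ)) := by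
  obtain rfl | hl2 := hl.eq_or_lt
  · exact htri
  refine containsCopy_cycleGraph_odd hl htri fun u v w => ?_
  have hdeg : ∀ v, n / 2 - S.card ≤ (G.induce ((S : Set (Fin n))ᶜ)).degree v := fun v =>
    (Nat.sub_le_sub_right (hdelta.trans (G.minDegree_le_degree v)) _).trans
      (degree_sub_card_le_degree_induce_compl S v)
  have hcount := three_mul_le_card_add_two_mul_ncard hdeg u v w
  simp only [Fintype.card_compl_set, Fintype.card_fin, Finset.coe_sort_coe, Fintype.card_coe]
    at hcount
  obtain ⟨T, rfl⟩ : ∃ T, t = T + 1 := ⟨t - 1, by omega⟩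
  have : 8 * (T + 1) * l = 8 * (T * l) + 8 * l := by ring
  have : (T + 1 - 1) * (2 * l + 1) = 2 * (T * l) + T := by rw [Nat.add_sub_cancel]; ring
  omega
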